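/- arXiv:2510.09456 — 6 statements merged into one kernel-verified Lean document; each statement's English description precedes it below -/
import Mathlib

section
/- If M : ℂ^d → ℂ^d ⊗ ℂ^d is an isometry masking the unitaries {1, U} (i.e., the partial traces over A and of over B of M ρ M† and of M U ρ U† M† agree for all density matrices ρ), and |e₁⟩, |e₂⟩ are eigenvectors of U with distinct eigenvalues, then Tr_B(M|e₁⟩⟨e₁|M†) and Tr_B(M|e₂⟩⟨e₂|M†) have orthogonal supports, and likewise for Tr_A. -/
open Matrix
open scoped ComplexOrder

noncomputable section

/-- Partial trace over the first (A) factor. -/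
def ptA {dA dB : ℕ} (M : Matrix (Fin dA × Fin dB) (Fin dA × Fin dB) ℂ) :
    Matrix (Fin dB) (Fin dB) ℂ :=
  fun i j => ∑ k, M (k, i) (k, j)

/-- Partial trace over the second (B) factor. -/
def ptB {dA dB : ℕ} (M : Matrix (Fin dA × Fin dB) (Fin dA × Fin dB) ℂ) :
    Matrix (Fin dA) (Fin dA) ℂ :=
  fun i j => ∑ k, M (i, k) (j, k)

section aux

variable {m n : Type*} [Fintype m] [Fintype n]

omit [Fintype m] in
lemma aux_vmv_conj (A : Matrix m n ℂ) (x y : n → ℂ) :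
    A * vecMulVec x (star y) * Aᴴ = vecMulVec (A *ᵥ x) (star (A *ᵥ y)) := by
  ext i j
  simp only [Matrix.mul_apply, vecMulVec_apply, mulVec, dotProduct, conjTranspose_apply,
    Pi.star_apply, Finset.sum_mul, Finset.mul_sum, star_sum, star_mul', RCLike.star_def]
  refine Finset.sum_congr rfl fun k _ => Finset.sum_congr rfl fun l _ => by ring

omit [Fintype m] in
lemma aux_psd_half_outer (v : n → ℂ) : ((2⁻¹:ℂ) • vecMulVec v (star v)).PosSemidef := by
  rw [posSemidef_iff_dotProduct_mulVec]
  constructor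
  · ext i j
    simp [vecMulVec_apply, conjTranspose_apply, mul_comm]
  · intro x
    have h1 : vecMulVec v (star v) *ᵥ x = (star v ⬝ᵥ x) • v := by
      ext i
      simp [vecMulVec_apply, mulVec, dotProduct, Finset.mul_sum, mul_comm, mul_left_comm]
    simp only [Matrix.smul_mulVec, h1, dotProduct_smul, smul_eq_mul]
    have h2 : star x ⬝ᵥ v = star (star v ⬝ᵥ x) := by
      simp [dotProduct, star_sum, mul_comm]
    rw [h2, mul_comm (star v ⬝ᵥ x)]
    have h4 : (0:ℂ) ≤ 2⁻¹ := by norm_num [Complex.le_def]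
    exact mul_nonneg h4 (star_mul_self_nonneg _)

omit [Fintype m] in
lemma aux_trace_outer (v : n → ℂ) : (vecMulVec v (star v)).trace = star v ⬝ᵥ v := by
  simp [Matrix.trace, Matrix.diag, vecMulVec_apply, dotProduct, mul_comm]

omit [Fintype m] in
lemma aux_vmv_bilin (x₁ x₂ : n → ℂ) (c : ℂ) :
    vecMulVec (x₁ + c • x₂) (star (x₁ + c • x₂)) =
      vecMulVec x₁ (star x₁) + (starRingEnd ℂ c) • vecMulVec x₁ (star x₂)
        + c • vecMulVec x₂ (star x₁)
        + (c * starRingEnd ℂ c) • vecMulVec x₂ (star x₂) := by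
  ext i j
  simp [vecMulVec_apply, mul_add, add_mul]
  ring

end aux

section pt

variable {dA dB : ℕ}

lemma ptA_add (A B : Matrix (Fin dA × Fin dB) (Fin dA × Fin dB) ℂ) :
    ptA (A + B) = ptA A + ptA B := by
  ext i j; simp [ptA, Finset.sum_add_distrib]

lemma ptA_smul (c : ℂ) (A : Matrix (Fin dA × Fin dB) (Fin dA × Fin dB) ℂ) :
    ptA (c • A) = c • ptA A := by
  ext i j; simp [ptA, Finset.mul_sum]

lemma ptB_add (A B : Matrix (Fin dA × Fin dB) (Fin dA × Fin dB) ℂ) :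
    ptB (A + B) = ptB A + ptB B := by
  ext i j; simp [ptB, Finset.sum_add_distrib]

lemma ptB_smul (c : ℂ) (A : Matrix (Fin dA × Fin dB) (Fin dA × Fin dB) ℂ) :
    ptB (c • A) = c • ptB A := by
  ext i j; simp [ptB, Finset.mul_sum]

/-- reshape a vector on the product space into a matrix -/
def toMat (ψ : Fin dA × Fin dB → ℂ) : Matrix (Fin dA) (Fin dB) ℂ :=
  Matrix.of fun a b => ψ (a, b)

lemma ptB_vmv (ψ φ : Fin dA × Fin dB → ℂ) :
    ptB (vecMulVec ψ (star φ)) = toMat ψ * (toMat φ)ᴴ := by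
  ext i j
  simp [ptB, toMat, vecMulVec_apply, Matrix.mul_apply, conjTranspose_apply]

lemma ptA_vmv (ψ φ : Fin dA × Fin dB → ℂ) :
    ptA (vecMulVec ψ (star φ)) = ((toMat φ)ᴴ * toMat ψ)ᵀ := by
  ext i j
  simp [ptA, toMat, vecMulVec_apply, Matrix.mul_apply, conjTranspose_apply, transpose_apply,
    mul_comm]

end pt

theorem stmt0 {d dA dB : ℕ}
    (M : Matrix (Fin dA × Fin dB) (Fin d) ℂ) (hM : Mᴴ * M = 1)
    (U : Matrix (Fin d) (Fin d) ℂ) (hU : U ∈ Matrix.unitaryGroup (Fin d) ℂ)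
    (hmask : ∀ ρ : Matrix (Fin d) (Fin d) ℂ, ρ.PosSemidef → ρ.trace = 1 →
      ptA (M * ρ * Mᴴ) = ptA (M * (U * ρ * Uᴴ) * Mᴴ) ∧
      ptB (M * ρ * Mᴴ) = ptB (M * (U * ρ * Uᴴ) * Mᴴ))
    (e₁ e₂ : Fin d → ℂ) (μ₁ μ₂ : ℂ)
    (he₁ : star e₁ ⬝ᵥ e₁ = 1) (he₂ : star e₂ ⬝ᵥ e₂ = 1)
    (hUe₁ : U *ᵥ e₁ = μ₁ • e₁) (hUe₂ : U *ᵥ e₂ = μ₂ • e₂)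
    (hμ : μ₁ ≠ μ₂) :
    ptB (M * vecMulVec e₁ (star e₁) * Mᴴ) * ptB (M * vecMulVec e₂ (star e₂) * Mᴴ) = 0 ∧
    ptA (M * vecMulVec e₁ (star e₁) * Mᴴ) * ptA (M * vecMulVec e₂ (star e₂) * Mᴴ) = 0 := by
  have hUU : Uᴴ * U = 1 := hU.1
  -- inner products are preserved by U
  have key : ∀ (x y : Fin d → ℂ), star (U *ᵥ x) ⬝ᵥ (U *ᵥ y) = star x ⬝ᵥ y := by
    intro x y
    rw [Matrix.star_mulVec, dotProduct_mulVec, vecMul_vecMul, hUU, vecMul_one]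
  -- eigenvalues have unit modulus
  have hm1 : starRingEnd ℂ μ₁ * μ₁ = 1 := by
    have h := key e₁ e₁
    rw [hUe₁] at h
    simp only [star_smul, smul_dotProduct, dotProduct_smul, he₁, smul_eq_mul, RCLike.star_def] at h
    linear_combination h
  have hm2 : starRingEnd ℂ μ₂ * μ₂ = 1 := by
    have h := key e₂ e₂
    rw [hUe₂] at h
    simp only [star_smul, smul_dotProduct, dotProduct_smul, he₂, smul_eq_mul, RCLike.star_def] at h
    linear_combination h
  -- eigenvalue products differ from 1
  have hne : μ₂ * starRingEnd ℂ μ₁ ≠ 1 := by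
    intro h
    apply hμ
    have : μ₁ * (μ₂ * starRingEnd ℂ μ₁) = μ₁ * 1 := by rw [h]
    rw [mul_one] at this
    calc μ₁ = μ₁ * (μ₂ * starRingEnd ℂ μ₁) := this.symm
      _ = μ₂ * (starRingEnd ℂ μ₁ * μ₁) := by ring
      _ = μ₂ := by rw [hm1, mul_one]
  -- orthogonality of eigenvectors
  have ho12 : star e₁ ⬝ᵥ e₂ = 0 := by
    have h := key e₁ e₂
    rw [hUe₁, hUe₂] at h
    simp only [star_smul, smul_dotProduct, dotProduct_smul, smul_eq_mul, RCLike.star_def] at h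
    have h' : (μ₂ * starRingEnd ℂ μ₁ - 1) * (star e₁ ⬝ᵥ e₂) = 0 := by linear_combination h
    rcases mul_eq_zero.mp h' with h0 | h0
    · exact absurd (sub_eq_zero.mp h0) hne
    · exact h0
  have ho21 : star e₂ ⬝ᵥ e₁ = 0 := by
    have h : star (star e₁ ⬝ᵥ e₂) = 0 := by rw [ho12]; simp
    rw [← h]
    simp [dotProduct, star_sum, mul_comm]
  -- reshaped masked eigenvectors
  set ψ₁ : Fin dA × Fin dB → ℂ := M *ᵥ e₁ with hψ₁
  set ψ₂ : Fin dA × Fin dB → ℂ := M *ᵥ e₂ with hψ₂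
  set F₁ := toMat ψ₁ with hF₁
  set F₂ := toMat ψ₂ with hF₂
  have hsmulconj : ∀ {p q : Type} [Fintype q] (A : Matrix p q ℂ) (X : Matrix q q ℂ),
      A * ((2⁻¹:ℂ) • X) * Aᴴ = (2⁻¹:ℂ) • (A * X * Aᴴ) := by
    intro p q _ A X
    rw [Matrix.mul_smul, Matrix.smul_mul]
  have hbil : ∀ {q : Type} (a b : ℂ) (x₁ x₂ : q → ℂ),
      vecMulVec (a • x₁ + b • x₂) (star (a • x₁ + b • x₂)) =
        (a * starRingEnd ℂ a) • vecMulVec x₁ (star x₁)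
          + (a * starRingEnd ℂ b) • vecMulVec x₁ (star x₂)
          + (b * starRingEnd ℂ a) • vecMulVec x₂ (star x₁)
          + (b * starRingEnd ℂ b) • vecMulVec x₂ (star x₂) := by
    intro q a b x₁ x₂
    ext i j
    simp [vecMulVec_apply, mul_add, add_mul]
    ring
  -- expansion of the partial traces of the masked states
  have lhsB : ∀ a b : ℂ,
      ptB (M * ((2⁻¹:ℂ) • vecMulVec (a • e₁ + b • e₂) (star (a • e₁ + b • e₂))) * Mᴴ)
        = (2⁻¹:ℂ) • ((a * starRingEnd ℂ a) • (F₁ * F₁ᴴ) + (a * starRingEnd ℂ b) • (F₁ * F₂ᴴ)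
            + (b * starRingEnd ℂ a) • (F₂ * F₁ᴴ) + (b * starRingEnd ℂ b) • (F₂ * F₂ᴴ)) := by
    intro a b
    rw [hsmulconj, aux_vmv_conj]
    have hv : M *ᵥ (a • e₁ + b • e₂) = a • ψ₁ + b • ψ₂ := by
      simp [mulVec_add, mulVec_smul, hψ₁, hψ₂]
    rw [hv, hbil, ptB_smul, ptB_add, ptB_add, ptB_add, ptB_smul, ptB_smul, ptB_smul, ptB_smul,
      ptB_vmv, ptB_vmv, ptB_vmv, ptB_vmv]
  have lhsA : ∀ a b : ℂ,
      ptA (M * ((2⁻¹:ℂ) • vecMulVec (a • e₁ + b • e₂) (star (a • e₁ + b • e₂))) * Mᴴ)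
        = (2⁻¹:ℂ) • ((a * starRingEnd ℂ a) • (F₁ᴴ * F₁)ᵀ + (a * starRingEnd ℂ b) • (F₂ᴴ * F₁)ᵀ
            + (b * starRingEnd ℂ a) • (F₁ᴴ * F₂)ᵀ + (b * starRingEnd ℂ b) • (F₂ᴴ * F₂)ᵀ) := by
    intro a b
    rw [hsmulconj, aux_vmv_conj]
    have hv : M *ᵥ (a • e₁ + b • e₂) = a • ψ₁ + b • ψ₂ := by
      simp [mulVec_add, mulVec_smul, hψ₁, hψ₂]
    rw [hv, hbil, ptA_smul, ptA_add, ptA_add, ptA_add, ptA_smul, ptA_smul, ptA_smul, ptA_smul,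
      ptA_vmv, ptA_vmv, ptA_vmv, ptA_vmv]
  have stepU : ∀ a b : ℂ,
      U * ((2⁻¹:ℂ) • vecMulVec (a • e₁ + b • e₂) (star (a • e₁ + b • e₂))) * Uᴴ
        = (2⁻¹:ℂ) • vecMulVec ((a * μ₁) • e₁ + (b * μ₂) • e₂)
            (star ((a * μ₁) • e₁ + (b * μ₂) • e₂)) := by
    intro a b
    rw [hsmulconj, aux_vmv_conj]
    have hv : U *ᵥ (a • e₁ + b • e₂) = (a * μ₁) • e₁ + (b * μ₂) • e₂ := by
      simp [mulVec_add, mulVec_smul, hUe₁, hUe₂, smul_smul]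
    rw [hv]
  -- the mask condition, applied to the state (a e₁ + b e₂)/√2 with |a| = |b| = 1
  have maskEq : ∀ a b : ℂ, starRingEnd ℂ a * a = 1 → starRingEnd ℂ b * b = 1 →
      ((2⁻¹:ℂ) • ((a * starRingEnd ℂ a) • (F₁ᴴ * F₁)ᵀ + (a * starRingEnd ℂ b) • (F₂ᴴ * F₁)ᵀ
          + (b * starRingEnd ℂ a) • (F₁ᴴ * F₂)ᵀ + (b * starRingEnd ℂ b) • (F₂ᴴ * F₂)ᵀ)
        = (2⁻¹:ℂ) • (((a * μ₁) * starRingEnd ℂ (a * μ₁)) • (F₁ᴴ * F₁)ᵀ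
          + ((a * μ₁) * starRingEnd ℂ (b * μ₂)) • (F₂ᴴ * F₁)ᵀ
          + ((b * μ₂) * starRingEnd ℂ (a * μ₁)) • (F₁ᴴ * F₂)ᵀ
          + ((b * μ₂) * starRingEnd ℂ (b * μ₂)) • (F₂ᴴ * F₂)ᵀ)) ∧
      ((2⁻¹:ℂ) • ((a * starRingEnd ℂ a) • (F₁ * F₁ᴴ) + (a * starRingEnd ℂ b) • (F₁ * F₂ᴴ)
          + (b * starRingEnd ℂ a) • (F₂ * F₁ᴴ) + (b * starRingEnd ℂ b) • (F₂ * F₂ᴴ))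
        = (2⁻¹:ℂ) • (((a * μ₁) * starRingEnd ℂ (a * μ₁)) • (F₁ * F₁ᴴ)
          + ((a * μ₁) * starRingEnd ℂ (b * μ₂)) • (F₁ * F₂ᴴ)
          + ((b * μ₂) * starRingEnd ℂ (a * μ₁)) • (F₂ * F₁ᴴ)
          + ((b * μ₂) * starRingEnd ℂ (b * μ₂)) • (F₂ * F₂ᴴ))) := by
    intro a b ha hb
    have htr : ((2⁻¹:ℂ) • vecMulVec (a • e₁ + b • e₂) (star (a • e₁ + b • e₂))).trace = 1 := by
      rw [Matrix.trace_smul, aux_trace_outer]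
      simp only [star_add, star_smul, add_dotProduct, dotProduct_add, smul_dotProduct,
        dotProduct_smul, he₁, he₂, ho12, ho21, smul_eq_mul, RCLike.star_def]
      linear_combination (2⁻¹:ℂ) * ha + (2⁻¹:ℂ) * hb
    obtain ⟨h1, h2⟩ := hmask _ (aux_psd_half_outer _) htr
    rw [lhsA, stepU, lhsA] at h1
    rw [lhsB, stepU, lhsB] at h2
    exact ⟨h1, h2⟩
  -- derive the vanishing of the cross terms
  have hIc : starRingEnd ℂ Complex.I * Complex.I = 1 := by
    simp [Complex.conj_I]
  have hX : F₂ * F₁ᴴ = 0 := by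
    have h1 := (maskEq 1 1 (by norm_num) (by norm_num)).2
    have h2 := (maskEq 1 Complex.I (by norm_num) hIc).2
    ext i j
    have e1 := congrFun (congrFun h1 i) j
    have e2 := congrFun (congrFun h2 i) j
    simp only [Matrix.smul_apply, Matrix.add_apply, smul_eq_mul, _root_.map_one, Complex.conj_I,
      _root_.map_mul, one_mul, mul_one] at e1 e2
    have hg : (F₂ * F₁ᴴ) i j * (1 - μ₂ * starRingEnd ℂ μ₁) = 0 := by
      linear_combination e1 - Complex.I * e2
        + ((1 - Complex.I) / 2 * ((F₁ * F₁ᴴ) i j)) * hm1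
        + ((1 - Complex.I) / 2 * ((F₂ * F₂ᴴ) i j)) * hm2
        + ((1 - μ₂ * starRingEnd ℂ μ₁) * ((F₂ * F₁ᴴ) i j) / 2
            + (μ₂ * starRingEnd ℂ μ₂ - 1) * ((F₂ * F₂ᴴ) i j) * Complex.I / 2
            + (μ₁ * starRingEnd ℂ μ₂ - 1) * ((F₁ * F₂ᴴ) i j) / 2) * Complex.I_sq
    rcases mul_eq_zero.mp hg with h | h
    · simpa using h
    · exact absurd (by linear_combination -h) hne
  have hY : F₁ᴴ * F₂ = 0 := by
    have h1 := (maskEq 1 1 (by norm_num) (by norm_num)).1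
    have h2 := (maskEq 1 Complex.I (by norm_num) hIc).1
    ext i j
    have e1 := congrFun (congrFun h1 j) i
    have e2 := congrFun (congrFun h2 j) i
    simp only [Matrix.smul_apply, Matrix.add_apply, Matrix.transpose_apply, smul_eq_mul,
      _root_.map_one, Complex.conj_I, _root_.map_mul, one_mul, mul_one] at e1 e2
    have hg : (F₁ᴴ * F₂) i j * (1 - μ₂ * starRingEnd ℂ μ₁) = 0 := by
      linear_combination e1 - Complex.I * e2
        + ((1 - Complex.I) / 2 * ((F₁ᴴ * F₁) i j)) * hm1
        + ((1 - Complex.I) / 2 * ((F₂ᴴ * F₂) i j)) * hm2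
        + ((1 - μ₂ * starRingEnd ℂ μ₁) * ((F₁ᴴ * F₂) i j) / 2
            + (μ₂ * starRingEnd ℂ μ₂ - 1) * ((F₂ᴴ * F₂) i j) * Complex.I / 2
            + (μ₁ * starRingEnd ℂ μ₂ - 1) * ((F₂ᴴ * F₁) i j) / 2) * Complex.I_sq
    rcases mul_eq_zero.mp hg with h | h
    · simpa using h
    · exact absurd (by linear_combination -h) hne
  -- conclude
  constructor
  · rw [aux_vmv_conj, aux_vmv_conj, ← hψ₁, ← hψ₂, ptB_vmv, ptB_vmv, ← hF₁, ← hF₂]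
    calc F₁ * F₁ᴴ * (F₂ * F₂ᴴ) = F₁ * ((F₁ᴴ * F₂) * F₂ᴴ) := by
          rw [Matrix.mul_assoc, Matrix.mul_assoc]
      _ = 0 := by rw [hY, Matrix.zero_mul, Matrix.mul_zero]
  · rw [aux_vmv_conj, aux_vmv_conj, ← hψ₁, ← hψ₂, ptA_vmv, ptA_vmv, ← hF₁, ← hF₂]
    rw [← Matrix.transpose_mul]
    calc (F₂ᴴ * F₂ * (F₁ᴴ * F₁))ᵀ = (F₂ᴴ * ((F₂ * F₁ᴴ) * F₁))ᵀ := by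
          rw [Matrix.mul_assoc, Matrix.mul_assoc]
      _ = 0 := by rw [hX, Matrix.zero_mul, Matrix.mul_zero, Matrix.transpose_zero]
end
end

section
/- If an isometry M masks the pair of unitaries {1, U} and |e₁⟩, |e₂⟩ are eigenvectors of U with distinct eigenvalues, writing |E_i⟩ = M|e_i⟩, then Tr_A(|E₁⟩⟨E₂|) = 0 and Tr_B(|E₁⟩⟨E₂|) = 0. -/
open Matrix
open scoped ComplexOrder

noncomputable section

lemma conjOuter {m n : Type*} [Fintype m] [Fintype n] (A : Matrix m n ℂ) (v w : n → ℂ) :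
    A * vecMulVec v (star w) * Aᴴ = vecMulVec (A *ᵥ v) (star (A *ᵥ w)) := by
  ext i j
  simp only [mul_apply, vecMulVec_apply, conjTranspose_apply, mulVec, dotProduct,
    Pi.star_apply, Finset.sum_mul, Finset.mul_sum, star_sum, star_mul']
  apply Finset.sum_congr rfl; intro k _
  apply Finset.sum_congr rfl; intro l _
  ring

lemma outer_psd' {n : Type*} [Fintype n] (v : n → ℂ) :
    ((1/2 : ℂ) • vecMulVec v (star v)).PosSemidef := by
  refine Matrix.posSemidef_iff_dotProduct_mulVec.mpr ⟨?_, ?_⟩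
  · ext i j
    simp [vecMulVec_apply, conjTranspose_apply, mul_comm]
  · intro x
    have h : dotProduct (star x) (((1/2 : ℂ) • vecMulVec v (star v)) *ᵥ x) =
        (1/2 : ℂ) * (star (star v ⬝ᵥ x) * (star v ⬝ᵥ x)) := by
      simp only [dotProduct, mulVec, vecMulVec_apply, Pi.star_apply, star_sum, star_mul',
        Matrix.smul_apply, smul_eq_mul, Finset.mul_sum, Finset.sum_mul, star_star]
      rw [Finset.sum_comm]
      apply Finset.sum_congr rfl; intro k _
      apply Finset.sum_congr rfl; intro l _
      ring
    rw [h]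
    apply mul_nonneg
    · rw [Complex.le_def]; norm_num
    · exact star_mul_self_nonneg _

lemma outer_trace' {n : Type*} [Fintype n] (v : n → ℂ) :
    (vecMulVec v (star v)).trace = star v ⬝ᵥ v := by
  simp [Matrix.trace, vecMulVec_apply, dotProduct, Matrix.diag, mul_comm]

lemma vmv_add_left {m n : Type*} (a b : m → ℂ) (w : n → ℂ) :
    vecMulVec (a + b) w = vecMulVec a w + vecMulVec b w := by
  ext i j; simp [vecMulVec_apply, add_mul]

lemma vmv_add_right {m n : Type*} (a : m → ℂ) (v w : n → ℂ) :
    vecMulVec a (v + w) = vecMulVec a v + vecMulVec a w := by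
  ext i j; simp [vecMulVec_apply, mul_add]

lemma vmv_smul_left {m n : Type*} (c : ℂ) (a : m → ℂ) (w : n → ℂ) :
    vecMulVec (c • a) w = c • vecMulVec a w := by
  ext i j; simp [vecMulVec_apply, mul_assoc]

lemma vmv_smul_right {m n : Type*} (c : ℂ) (a : m → ℂ) (w : n → ℂ) :
    vecMulVec a (c • w) = c • vecMulVec a w := by
  ext i j; simp [vecMulVec_apply]; ring

lemma uni_inner {d : ℕ} (U : Matrix (Fin d) (Fin d) ℂ)
    (hU : U ∈ Matrix.unitaryGroup (Fin d) ℂ) (x y : Fin d → ℂ) :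
    star (U *ᵥ x) ⬝ᵥ (U *ᵥ y) = star x ⬝ᵥ y := by
  rw [star_mulVec, dotProduct_mulVec, vecMul_vecMul]
  have h1 : Uᴴ * U = 1 := hU.1
  rw [h1, vecMul_one]

lemma mask_cross {d dA dB n : ℕ}
    (M : Matrix (Fin dA × Fin dB) (Fin d) ℂ)
    (U : Matrix (Fin d) (Fin d) ℂ) (hU : U ∈ Matrix.unitaryGroup (Fin d) ℂ)
    (pt : Matrix (Fin dA × Fin dB) (Fin dA × Fin dB) ℂ → Matrix (Fin n) (Fin n) ℂ)
    (hadd : ∀ X Y, pt (X + Y) = pt X + pt Y)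
    (hsmul : ∀ (c : ℂ) X, pt (c • X) = c • pt X)
    (hmask : ∀ ρ : Matrix (Fin d) (Fin d) ℂ, ρ.PosSemidef → ρ.trace = 1 →
      pt (M * ρ * Mᴴ) = pt (M * (U * ρ * Uᴴ) * Mᴴ))
    (e₁ e₂ : Fin d → ℂ) (μ₁ μ₂ : ℂ)
    (he₁ : star e₁ ⬝ᵥ e₁ = 1) (he₂ : star e₂ ⬝ᵥ e₂ = 1)
    (hUe₁ : U *ᵥ e₁ = μ₁ • e₁) (hUe₂ : U *ᵥ e₂ = μ₂ • e₂)
    (hμ : μ₁ ≠ μ₂) :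
    pt (vecMulVec (M *ᵥ e₁) (star (M *ᵥ e₂))) = 0 := by
  have hm1 : μ₁ * star μ₁ = 1 := by
    have h := uni_inner U hU e₁ e₁
    rw [hUe₁] at h
    simpa [star_smul, smul_dotProduct, dotProduct_smul, he₁, smul_eq_mul, mul_assoc] using h
  have hm2 : μ₂ * star μ₂ = 1 := by
    have h := uni_inner U hU e₂ e₂
    rw [hUe₂] at h
    simpa [star_smul, smul_dotProduct, dotProduct_smul, he₂, smul_eq_mul, mul_assoc] using h
  have h12 : star e₁ ⬝ᵥ e₂ = 0 := by
    have h := uni_inner U hU e₁ e₂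
    rw [hUe₁, hUe₂] at h
    simp only [star_smul, smul_dotProduct, dotProduct_smul, smul_eq_mul] at h
    by_contra hne
    apply hμ
    have h' : (star μ₁ * μ₂) * (star e₁ ⬝ᵥ e₂) = 1 * (star e₁ ⬝ᵥ e₂) := by
      linear_combination h
    have hc := mul_right_cancel₀ hne h'
    linear_combination μ₂ * hm1 - μ₁ * hc
  have h21 : star e₂ ⬝ᵥ e₁ = 0 := by
    have h := uni_inner U hU e₂ e₁
    rw [hUe₁, hUe₂] at h
    simp only [star_smul, smul_dotProduct, dotProduct_smul, smul_eq_mul] at h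
    by_contra hne
    apply hμ
    have h' : (star μ₂ * μ₁) * (star e₂ ⬝ᵥ e₁) = 1 * (star e₂ ⬝ᵥ e₁) := by
      linear_combination h
    have hc := mul_right_cancel₀ hne h'
    linear_combination μ₂ * hc - μ₁ * hm2
  -- the masking identity for outer products of normalized-to-2 vectors
  have key : ∀ x : Fin d → ℂ, star x ⬝ᵥ x = 2 →
      pt (vecMulVec (M *ᵥ x) (star (M *ᵥ x))) =
      pt (vecMulVec (M *ᵥ (U *ᵥ x)) (star (M *ᵥ (U *ᵥ x)))) := by
    intro x hx
    have htr : ((1/2 : ℂ) • vecMulVec x (star x)).trace = 1 := by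
      rw [Matrix.trace_smul, outer_trace', hx]
      norm_num
    have h := hmask _ (outer_psd' x) htr
    simp only [Matrix.mul_smul, Matrix.smul_mul, conjOuter, hsmul] at h
    have h2 := congrArg (fun Z => (2 : ℂ) • Z) h
    simpa [smul_smul] using h2
  set E₁ := M *ᵥ e₁ with hE₁
  set E₂ := M *ᵥ e₂ with hE₂
  have expand : ∀ c₁ c₂ : ℂ,
      pt (vecMulVec (M *ᵥ (c₁ • e₁ + c₂ • e₂)) (star (M *ᵥ (c₁ • e₁ + c₂ • e₂)))) =
      (star c₁ * c₁) • pt (vecMulVec E₁ (star E₁)) +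
      (star c₂ * c₁) • pt (vecMulVec E₁ (star E₂)) +
      (star c₁ * c₂) • pt (vecMulVec E₂ (star E₁)) +
      (star c₂ * c₂) • pt (vecMulVec E₂ (star E₂)) := by
    intro c₁ c₂
    rw [mulVec_add, mulVec_smul, mulVec_smul, ← hE₁, ← hE₂]
    rw [star_add, star_smul, star_smul]
    simp only [vmv_add_left, vmv_add_right, vmv_smul_left, vmv_smul_right, hadd, hsmul,
      smul_add, smul_smul]
    abel
  have hx2 : star (e₁ + e₂) ⬝ᵥ (e₁ + e₂) = 2 := by
    rw [star_add, add_dotProduct, dotProduct_add, dotProduct_add, he₁, he₂, h12, h21]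
    norm_num
  have hw2 : star (e₁ + Complex.I • e₂) ⬝ᵥ (e₁ + Complex.I • e₂) = 2 := by
    rw [star_add, star_smul, add_dotProduct, dotProduct_add, dotProduct_add,
      smul_dotProduct, smul_dotProduct, dotProduct_smul, dotProduct_smul,
      he₁, he₂, h12, h21]
    simp [Complex.star_def, Complex.conj_I]
    ring_nf
  have k1 := key (e₁ + e₂) hx2
  have hU1 : U *ᵥ (e₁ + e₂) = μ₁ • e₁ + μ₂ • e₂ := by
    rw [mulVec_add, hUe₁, hUe₂]
  have l1 : e₁ + e₂ = (1 : ℂ) • e₁ + (1 : ℂ) • e₂ := by simp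
  rw [hU1, l1, expand 1 1, expand μ₁ μ₂] at k1
  have k2 := key (e₁ + Complex.I • e₂) hw2
  have hU2 : U *ᵥ (e₁ + Complex.I • e₂) = μ₁ • e₁ + (Complex.I * μ₂) • e₂ := by
    rw [mulVec_add, mulVec_smul, hUe₁, hUe₂, smul_smul]
  have l2 : e₁ + Complex.I • e₂ = (1 : ℂ) • e₁ + Complex.I • e₂ := by simp
  rw [hU2, l2, expand 1 Complex.I, expand μ₁ (Complex.I * μ₂)] at k2
  -- normalize star products in coefficients
  simp only [star_one, one_mul, mul_one, star_mul'] at k1 k2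
  -- entrywise conclusion
  ext i j
  have e1 := congrFun (congrFun k1 i) j
  have e2 := congrFun (congrFun k2 i) j
  simp only [Matrix.add_apply, Matrix.smul_apply, smul_eq_mul, Matrix.zero_apply] at e1 e2 ⊢
  set t := pt (vecMulVec E₁ (star E₂)) i j
  set s := pt (vecMulVec E₂ (star E₁)) i j
  set p₁ := pt (vecMulVec E₁ (star E₁)) i j
  set p₂ := pt (vecMulVec E₂ (star E₂)) i j
  have hsI : star Complex.I = -Complex.I := by
    simp [Complex.star_def, Complex.conj_I]
  rw [hsI] at e2
  have hI := Complex.I_mul_I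
  have ha : μ₁ * star μ₂ ≠ 1 := by
    intro h
    apply hμ
    linear_combination μ₂ * h - μ₁ * hm2
  have e1' : t + s = (μ₁ * star μ₂) * t + (μ₂ * star μ₁) * s := by
    linear_combination e1 + p₁ * hm1 + p₂ * hm2
  have e2' : -Complex.I * t + Complex.I * s =
      -Complex.I * ((μ₁ * star μ₂) * t) + Complex.I * ((μ₂ * star μ₁) * s) := by
    linear_combination e2 + p₁ * hm1 - (Complex.I * Complex.I) * p₂ * hm2
  have ht2 : (2 - 2 * (μ₁ * star μ₂)) * t = 0 := by
    linear_combination e1' + Complex.I * e2' -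
      (-t + s + (μ₁ * star μ₂) * t - (μ₂ * star μ₁) * s) * hI
  rcases mul_eq_zero.mp ht2 with h | h
  · exfalso
    apply ha
    linear_combination -h / 2
  · exact h

theorem stmt1 {d dA dB : ℕ}
    (M : Matrix (Fin dA × Fin dB) (Fin d) ℂ) (hM : Mᴴ * M = 1)
    (U : Matrix (Fin d) (Fin d) ℂ) (hU : U ∈ Matrix.unitaryGroup (Fin d) ℂ)
    (hmask : ∀ ρ : Matrix (Fin d) (Fin d) ℂ, ρ.PosSemidef → ρ.trace = 1 →
      ptA (M * ρ * Mᴴ) = ptA (M * (U * ρ * Uᴴ) * Mᴴ) ∧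
      ptB (M * ρ * Mᴴ) = ptB (M * (U * ρ * Uᴴ) * Mᴴ))
    (e₁ e₂ : Fin d → ℂ) (μ₁ μ₂ : ℂ)
    (he₁ : star e₁ ⬝ᵥ e₁ = 1) (he₂ : star e₂ ⬝ᵥ e₂ = 1)
    (hUe₁ : U *ᵥ e₁ = μ₁ • e₁) (hUe₂ : U *ᵥ e₂ = μ₂ • e₂)
    (hμ : μ₁ ≠ μ₂) :
    ptA (vecMulVec (M *ᵥ e₁) (star (M *ᵥ e₂))) = 0 ∧
    ptB (vecMulVec (M *ᵥ e₁) (star (M *ᵥ e₂))) = 0 := by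
  constructor
  · exact mask_cross M U hU ptA
      (fun X Y => by ext i j; simp [ptA, Finset.sum_add_distrib])
      (fun c X => by ext i j; simp [ptA, Finset.mul_sum])
      (fun ρ h1 h2 => (hmask ρ h1 h2).1) e₁ e₂ μ₁ μ₂ he₁ he₂ hUe₁ hUe₂ hμ
  · exact mask_cross M U hU ptB
      (fun X Y => by ext i j; simp [ptB, Finset.sum_add_distrib])
      (fun c X => by ext i j; simp [ptB, Finset.mul_sum])
      (fun ρ h1 h2 => (hmask ρ h1 h2).2) e₁ e₂ μ₁ μ₂ he₁ he₂ hUe₁ hUe₂ hμ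
end
end

section
/- For a bipartite pure state |E₁⟩ = Σ_i |i⟩_A ⊗ |φ_i⟩_B and |E₂⟩ = Σ_i |i⟩_A ⊗ |φ'_i⟩_B (with {|i⟩} an orthonormal basis of A), if Tr_B(|E₁⟩⟨E₂|) = 0 then Tr_A(|E₁⟩⟨E₁|) · Tr_A(|E₂⟩⟨E₂|) = 0, i.e., the reduced states on B have orthogonal supports. -/
open Matrix
open scoped ComplexOrder

noncomputable section

/-! Writing a vector `u = Σ_i |i⟩ ⊗ |φ_i⟩` of `ℂ^{dA} ⊗ ℂ^{dB}` as the `dA × dB` coefficient matrix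
`Φ = of (curry u)` (row `i` is `φ_i`), one has `Tr_B |u⟩⟨v| = Φ Ψᴴ` and `Tr_A |u⟩⟨v| = Φᵀ (Ψᵀ)ᴴ`.
Hence `Tr_B |E₁⟩⟨E₂| = 0` says `Φ₁ Φ₂ᴴ = 0`, and the middle factor `(Φ₁ᵀ)ᴴ Φ₂ᵀ = (Φ₂ Φ₁ᴴ)ᵀ` of
`Tr_A |E₁⟩⟨E₁| · Tr_A |E₂⟩⟨E₂|` is the transposed adjoint of that matrix. -/

theorem ptB_vecMulVec_star {dA dB : ℕ} (u v : Fin dA × Fin dB → ℂ) :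
    ptB (vecMulVec u (star v)) = of (Function.curry u) * (of (Function.curry v))ᴴ := by
  ext i j
  simp [ptB, vecMulVec_apply, mul_apply]

theorem ptA_vecMulVec_star {dA dB : ℕ} (u v : Fin dA × Fin dB → ℂ) :
    ptA (vecMulVec u (star v)) = (of (Function.curry u))ᵀ * (of (Function.curry v))ᵀᴴ := by
  ext i j
  simp [ptA, vecMulVec_apply, mul_apply]

theorem stmt2_general {dA dB : ℕ}
    (E₁ E₂ : Fin dA × Fin dB → ℂ)
    (h : ptB (vecMulVec E₁ (star E₂)) = 0) :
    ptA (vecMulVec E₁ (star E₁)) * ptA (vecMulVec E₂ (star E₂)) = 0 := by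
  set Φ₁ := of (Function.curry E₁)
  set Φ₂ := of (Function.curry E₂)
  have hΦ : Φ₁ * Φ₂ᴴ = 0 := by rw [← ptB_vecMulVec_star, h]
  have hmid : Φ₁ᵀᴴ * Φ₂ᵀ = 0 := by
    rw [conjTranspose_transpose_eq_transpose_conjTranspose, ← transpose_mul, ← conjTranspose_conjTranspose Φ₂,
      ← conjTranspose_mul, hΦ, conjTranspose_zero, transpose_zero]
  rw [ptA_vecMulVec_star, ptA_vecMulVec_star, Matrix.mul_assoc, ← Matrix.mul_assoc Φ₁ᵀᴴ, hmid,
    Matrix.zero_mul, Matrix.mul_zero]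

theorem stmt2 {dA dB : ℕ}
    (φ φ' : Fin dA → Fin dB → ℂ)
    (E₁ E₂ : Fin dA × Fin dB → ℂ)
    (hE₁ : E₁ = fun p => φ p.1 p.2)
    (hE₂ : E₂ = fun p => φ' p.1 p.2)
    (h : ptB (vecMulVec E₁ (star E₂)) = 0) :
    ptA (vecMulVec E₁ (star E₁)) * ptA (vecMulVec E₂ (star E₂)) = 0 :=
  stmt2_general E₁ E₂ h
end
end

section
/- Let {W_n} be a pairwise commuting family of unitaries on ℂ^d with common orthonormal eigenbasis {|f_k⟩}_{k=1}^d, and define the isometry M = Σ_{k=1}^d |k⟩⊗|k⟩⟨f_k|. Then M masks the family {1} ∪ {W_n}: for every state ρ and every W in the family, Tr_A[M W ρ W† M†] = Tr_A[M ρ M†] and Tr_B[M W ρ W† M†] = Tr_B[M ρ M†]. -/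
open Matrix
open scoped ComplexOrder

noncomputable section

lemma entryLem {d : ℕ} (f : Fin d → Fin d → ℂ) (A : Matrix (Fin d) (Fin d) ℂ)
    (M : Matrix (Fin d × Fin d) (Fin d) ℂ)
    (hMdef : M = fun p j => if p.1 = p.2 then star (f p.1 j) else 0)
    (p q : Fin d × Fin d) :
    (M * A * Mᴴ) p q =
      if p.1 = p.2 ∧ q.1 = q.2 then star (f p.1) ⬝ᵥ (A *ᵥ f q.1) else 0 := by
  simp only [Matrix.mul_apply, Matrix.conjTranspose_apply, dotProduct, mulVec,
    Pi.star_apply]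
  subst hMdef
  by_cases h1 : p.1 = p.2 <;> by_cases h2 : q.1 = q.2 <;>
    simp [h1, h2, Finset.mul_sum, Finset.sum_mul, mul_comm, mul_left_comm]
  rw [Finset.sum_comm]; simp only [mul_assoc]

lemma ptALem {d : ℕ} (f : Fin d → Fin d → ℂ) (A : Matrix (Fin d) (Fin d) ℂ)
    (M : Matrix (Fin d × Fin d) (Fin d) ℂ)
    (hMdef : M = fun p j => if p.1 = p.2 then star (f p.1 j) else 0) :
    ptA (M * A * Mᴴ) = Matrix.diagonal (fun i => star (f i) ⬝ᵥ (A *ᵥ f i)) := by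
  funext i j
  simp only [ptA, entryLem f A M hMdef, Matrix.diagonal_apply]
  by_cases h : i = j
  · subst h; simp
  · simp only [h, if_false]
    refine Finset.sum_eq_zero fun k _ => ?_
    have : ¬ (k = i ∧ k = j) := fun ⟨h1,h2⟩ => h (h1 ▸ h2)
    simp [this]

lemma ptBLem {d : ℕ} (f : Fin d → Fin d → ℂ) (A : Matrix (Fin d) (Fin d) ℂ)
    (M : Matrix (Fin d × Fin d) (Fin d) ℂ)
    (hMdef : M = fun p j => if p.1 = p.2 then star (f p.1 j) else 0) :
    ptB (M * A * Mᴴ) = Matrix.diagonal (fun i => star (f i) ⬝ᵥ (A *ᵥ f i)) := by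
  funext i j
  simp only [ptB, entryLem f A M hMdef, Matrix.diagonal_apply]
  by_cases h : i = j
  · subst h; simp
  · simp only [h, if_false]
    refine Finset.sum_eq_zero fun k _ => ?_
    have : ¬ (i = k ∧ j = k) := fun ⟨h1,h2⟩ => h (h1.trans h2.symm)
    simp [this]

theorem stmt5 {d : ℕ} {ι : Type*}
    (W : ι → Matrix (Fin d) (Fin d) ℂ)
    (hW : ∀ n, W n ∈ Matrix.unitaryGroup (Fin d) ℂ)
    (f : Fin d → Fin d → ℂ)
    (horth : ∀ k l, star (f k) ⬝ᵥ f l = if k = l then 1 else 0)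
    (c : ι → Fin d → ℂ)
    (hc : ∀ n k, ‖c n k‖ = 1)
    (heig : ∀ n k, W n *ᵥ f k = c n k • f k)
    (M : Matrix (Fin d × Fin d) (Fin d) ℂ)
    (hMdef : M = fun p j => if p.1 = p.2 then star (f p.1 j) else 0) :
    ∀ ρ : Matrix (Fin d) (Fin d) ℂ, ρ.PosSemidef → ρ.trace = 1 → ∀ n,
      ptA (M * (W n * ρ * (W n)ᴴ) * Mᴴ) = ptA (M * ρ * Mᴴ) ∧
      ptB (M * (W n * ρ * (W n)ᴴ) * Mᴴ) = ptB (M * ρ * Mᴴ) := by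
  intro ρ _ _ n
  have key : ∀ k, star (f k) ⬝ᵥ ((W n * ρ * (W n)ᴴ) *ᵥ f k)
      = star (f k) ⬝ᵥ (ρ *ᵥ f k) := by
    intro k
    have hcne : c n k ≠ 0 := by
      intro h; have := hc n k; simp [h] at this
    have hunit : (W n)ᴴ * W n = 1 := by
      have := (hW n).1
      simpa [Matrix.star_eq_conjTranspose] using this
    have hWH : (W n)ᴴ *ᵥ f k = (c n k)⁻¹ • f k := by
      have h2 : (W n)ᴴ *ᵥ (W n *ᵥ f k) = f k := by
        rw [Matrix.mulVec_mulVec, hunit, Matrix.one_mulVec]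
      rw [heig, Matrix.mulVec_smul] at h2
      calc (W n)ᴴ *ᵥ f k = (c n k)⁻¹ • (c n k • ((W n)ᴴ *ᵥ f k)) := by
            rw [smul_smul, inv_mul_cancel₀ hcne, one_smul]
        _ = (c n k)⁻¹ • f k := by rw [h2]
    have hrow : star (f k) ᵥ* W n = star ((c n k)⁻¹) • star (f k) := by
      have := Matrix.star_mulVec (M := (W n)ᴴ) (v := f k)
      rw [Matrix.conjTranspose_conjTranspose] at this
      rw [← this, hWH, star_smul]
    have hnorm : star ((c n k)⁻¹) * (c n k)⁻¹ = 1 := by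
      have h1 : (starRingEnd ℂ) (c n k) * c n k = 1 := by
        rw [Complex.conj_mul', hc n k]; norm_num
      rw [star_inv₀, ← mul_inv, Complex.star_def, h1, inv_one]
    calc star (f k) ⬝ᵥ ((W n * ρ * (W n)ᴴ) *ᵥ f k)
        = star (f k) ⬝ᵥ (W n *ᵥ ((ρ * (W n)ᴴ) *ᵥ f k)) := by
          rw [Matrix.mulVec_mulVec, Matrix.mul_assoc]
      _ = (star (f k) ᵥ* W n) ⬝ᵥ ((ρ * (W n)ᴴ) *ᵥ f k) := by
          rw [Matrix.dotProduct_mulVec]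
      _ = (star ((c n k)⁻¹) • star (f k)) ⬝ᵥ (ρ *ᵥ ((c n k)⁻¹ • f k)) := by
          rw [hrow, ← Matrix.mulVec_mulVec, hWH]
      _ = (star ((c n k)⁻¹) * (c n k)⁻¹) * (star (f k) ⬝ᵥ (ρ *ᵥ f k)) := by
          rw [Matrix.mulVec_smul, smul_dotProduct, dotProduct_smul,
            smul_eq_mul, smul_eq_mul]; ring
      _ = star (f k) ⬝ᵥ (ρ *ᵥ f k) := by rw [hnorm, one_mul]
  constructor
  · rw [ptALem f _ M hMdef, ptALem f _ M hMdef]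
    exact congrArg Matrix.diagonal (funext key)
  · rw [ptBLem f _ M hMdef, ptBLem f _ M hMdef]
    exact congrArg Matrix.diagonal (funext key)
end
end

section
/- A family of qubit Pauli channels {E_p⃗ : p⃗ ∈ 𝔐} can be masked by an isometry if and only if there exists k ∈ {x, y, z} and a constant c ∈ [0,1] such that p₀ + p_k = c for all p⃗ ∈ 𝔐. -/
/-!
When `∑ p = ∑ q`, the difference `E_p(ρ) - E_q(ρ)` is `∑ₖ (p₀ + pₖ - q₀ - qₖ) tr(σₖ ρ) σₖ`.
Testing on the eigenstates `(1 + σₖ)/2`, an isometry `M` masks the family iff both marginals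
of `M σₖ Mᴴ` vanish for every `k` along which `p₀ + pₖ` varies over `𝔐`.

No isometry hides all three Paulis: let `U`, `V` be `M|0⟩`, `M|1⟩` reshaped into `dA × dB`
matrices. Hiding `σx` and `σy` from `B` hides `|1⟩⟨0|`, i.e. `Uᴴ V = 0`; hiding `σz` from `A`
means `U Uᴴ = V Vᴴ`. Then `(U Uᴴ)² = U (Uᴴ V) Vᴴ = 0`, so `U = 0`, contradicting `‖U‖ = 1`.

Conversely, both marginals of `C X Cᴴ` for the copy isometry `C : |a⟩ ↦ |aa⟩` are the diagonal
of `X`; composing `C` with the change to the eigenbasis of `σₖ` hides the other two Paulis.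
-/

open Matrix
open scoped ComplexOrder

noncomputable section

def σx : Matrix (Fin 2) (Fin 2) ℂ := !![0, 1; 1, 0]
def σy : Matrix (Fin 2) (Fin 2) ℂ := !![0, -Complex.I; Complex.I, 0]
def σz : Matrix (Fin 2) (Fin 2) ℂ := !![1, 0; 0, -1]

def pauli : Fin 4 → Matrix (Fin 2) (Fin 2) ℂ := ![1, σx, σy, σz]

/-- The Pauli channel with probability four-vector `p`. -/
def pauliChannel (p : Fin 4 → ℝ) (ρ : Matrix (Fin 2) (Fin 2) ℂ) :
    Matrix (Fin 2) (Fin 2) ℂ :=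
  ∑ i, ((p i : ℝ) : ℂ) • (pauli i * ρ * (pauli i)ᴴ)

theorem Matrix.eq_zero_of_conjTranspose_mul_eq_zero_of_mul_conjTranspose_eq {m n R : Type*}
    [Fintype m] [Fintype n] [PartialOrder R] [NonUnitalRing R] [StarRing R] [StarOrderedRing R]
    [NoZeroDivisors R] {A B : Matrix m n R} (hAB : Aᴴ * B = 0) (h : A * Aᴴ = B * Bᴴ) : A = 0 := by
  have hsq : (A * Aᴴ) * (A * Aᴴ) = 0 := by
    nth_rewrite 2 [h]
    rw [Matrix.mul_assoc, ← Matrix.mul_assoc Aᴴ, hAB, Matrix.zero_mul, Matrix.mul_zero]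
  rwa [self_mul_conjTranspose_mul_eq_zero, ← Matrix.mul_assoc,
    conjTranspose_mul_self_mul_eq_zero, self_mul_conjTranspose_eq_zero] at hsq

theorem add_le_one_of_sum_eq_one {ι : Type*} [Fintype ι] {p : ι → ℝ} (hp : ∀ i, 0 ≤ p i)
    (hsum : ∑ i, p i = 1) {i j : ι} (hij : i ≠ j) : p i + p j ≤ 1 := by
  classical
  rw [← Finset.sum_pair hij, ← hsum]
  exact Finset.sum_le_sum_of_subset_of_nonneg (Finset.subset_univ _) fun k _ _ => hp k

theorem exists_forall_eq_of_pairwise_eq {α : Type*} {s : Set α} {f : α → ℝ}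
    (hf : ∀ x ∈ s, 0 ≤ f x ∧ f x ≤ 1) (h : ∀ x ∈ s, ∀ y ∈ s, f x = f y) :
    ∃ c : ℝ, 0 ≤ c ∧ c ≤ 1 ∧ ∀ x ∈ s, f x = c := by
  rcases s.eq_empty_or_nonempty with rfl | ⟨x₀, hx₀⟩
  · exact ⟨0, le_rfl, zero_le_one, by simp⟩
  · exact ⟨f x₀, (hf x₀ hx₀).1, (hf x₀ hx₀).2, fun x hx => h x hx x₀ hx₀⟩

section Marginals

variable {dA dB n : ℕ}

def marginals (M : Matrix (Fin dA × Fin dB) (Fin n) ℂ) :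
    Matrix (Fin n) (Fin n) ℂ →ₗ[ℂ] Matrix (Fin dB) (Fin dB) ℂ × Matrix (Fin dA) (Fin dA) ℂ where
  toFun X := (ptA (M * X * Mᴴ), ptB (M * X * Mᴴ))
  map_add' X Y := by
    ext <;> simp [ptA, ptB, Matrix.mul_add, Matrix.add_mul, Finset.sum_add_distrib]
  map_smul' c X := by
    ext <;> simp [ptA, ptB, Finset.mul_sum]

theorem marginals_apply (M : Matrix (Fin dA × Fin dB) (Fin n) ℂ) (X : Matrix (Fin n) (Fin n) ℂ) :
    marginals M X = (ptA (M * X * Mᴴ), ptB (M * X * Mᴴ)) := rfl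

theorem marginals_mul (M : Matrix (Fin dA × Fin dB) (Fin n) ℂ) (U X : Matrix (Fin n) (Fin n) ℂ) :
    marginals (M * U) X = marginals M (U * X * Uᴴ) := by
  simp only [marginals_apply, conjTranspose_mul, Matrix.mul_assoc]

def basisImage (M : Matrix (Fin dA × Fin dB) (Fin n) ℂ) (a : Fin n) : Matrix (Fin dA) (Fin dB) ℂ :=
  of fun i j => M (i, j) a

theorem ptA_mul_single_mul_conjTranspose (M : Matrix (Fin dA × Fin dB) (Fin n) ℂ) (a b : Fin n) :
    ptA (M * single a b (1 : ℂ) * Mᴴ) = ((basisImage M b)ᴴ * basisImage M a)ᵀ := by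
  ext i j
  simp [ptA, basisImage, Matrix.mul_apply, single_apply, ite_and, mul_comm]

theorem ptB_mul_single_mul_conjTranspose (M : Matrix (Fin dA × Fin dB) (Fin n) ℂ) (a b : Fin n) :
    ptB (M * single a b (1 : ℂ) * Mᴴ) = basisImage M a * (basisImage M b)ᴴ := by
  ext i j
  simp [ptB, basisImage, Matrix.mul_apply, single_apply, ite_and]

def copyIsometry (n : ℕ) : Matrix (Fin n × Fin n) (Fin n) ℂ :=
  of fun x a => if x.1 = a ∧ x.2 = a then 1 else 0

theorem copyIsometry_conjTranspose_mul_self : (copyIsometry n)ᴴ * copyIsometry n = 1 := by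
  ext a b
  simp [copyIsometry, Matrix.mul_apply, one_apply, Fintype.sum_prod_type, ite_and,
    apply_ite (starRingEnd ℂ), eq_comm]

theorem marginals_copyIsometry (X : Matrix (Fin n) (Fin n) ℂ) :
    marginals (copyIsometry n) X = (diagonal X.diag, diagonal X.diag) := by
  ext i j <;> rcases eq_or_ne i j with rfl | hij <;>
    simp [marginals_apply, ptA, ptB, copyIsometry, Matrix.mul_apply, ite_and,
      apply_ite (starRingEnd ℂ), eq_comm, *]

end Marginals

theorem pauli_conjTranspose (i : Fin 4) : (pauli i)ᴴ = pauli i := by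
  fin_cases i <;> ext a b <;> fin_cases a <;> fin_cases b <;> simp [pauli, σx, σy, σz]

theorem pauli_mul_self (i : Fin 4) : pauli i * pauli i = 1 := by
  fin_cases i <;> ext a b <;> fin_cases a <;> fin_cases b <;> simp [pauli, σx, σy, σz]

theorem trace_pauli_succ (k : Fin 3) : (pauli k.succ).trace = 0 := by
  fin_cases k <;> simp [pauli, σx, σy, σz, trace]

theorem trace_pauli_succ_mul_pauli_succ (j k : Fin 3) :
    (pauli j.succ * pauli k.succ).trace = if j = k then 2 else 0 := by
  fin_cases j <;> fin_cases k <;> simp [pauli, σx, σy, σz, trace] <;> norm_num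

theorem single_one_zero_eq_smul_σx_sub_I_smul_σy :
    single 1 0 (1 : ℂ) = (2⁻¹ : ℂ) • (σx - Complex.I • σy) := by
  ext i j; fin_cases i <;> fin_cases j <;> norm_num [σx, σy]

theorem σz_eq_single_sub_single : σz = single 0 0 (1 : ℂ) - single 1 1 1 := by
  ext i j; fin_cases i <;> fin_cases j <;> simp [σz]

theorem pauliChannel_sub_pauliChannel {p q : Fin 4 → ℝ} (hpq : ∑ i, p i = ∑ i, q i)
    (ρ : Matrix (Fin 2) (Fin 2) ℂ) :
    pauliChannel p ρ - pauliChannel q ρ =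
      ∑ k : Fin 3,
        (((p 0 + p k.succ - (q 0 + q k.succ) : ℝ) : ℂ) * (pauli k.succ * ρ).trace) • pauli k.succ := by
  have hpq' : (p 0 + p 1 + p 2 + p 3 : ℂ) = q 0 + q 1 + q 2 + q 3 := by
    simpa [Fin.sum_univ_four] using congrArg (fun x : ℝ => (x : ℂ)) hpq
  ext i j
  fin_cases i <;> fin_cases j <;>
    simp [pauliChannel, Fin.sum_univ_four, Fin.sum_univ_three, pauli, σx, σy, σz, trace,
      Matrix.mul_apply, Fin.sum_univ_two, Matrix.vecMul, dotProduct, conjTranspose_apply] <;>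
    ring_nf <;> simp only [Complex.I_sq]
  · linear_combination ρ 1 1 * hpq'
  · linear_combination -ρ 0 1 * hpq'
  · linear_combination -ρ 1 0 * hpq'
  · linear_combination ρ 0 0 * hpq'

def pauliEigenstate (k : Fin 3) : Matrix (Fin 2) (Fin 2) ℂ := (2⁻¹ : ℂ) • (1 + pauli k.succ)

theorem pauliEigenstate_posSemidef (k : Fin 3) : (pauliEigenstate k).PosSemidef := by
  have hproj : (pauliEigenstate k)ᴴ * pauliEigenstate k = pauliEigenstate k := by
    simp only [pauliEigenstate, conjTranspose_smul, conjTranspose_add, conjTranspose_one,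
      pauli_conjTranspose, smul_mul_smul, add_mul, mul_add, pauli_mul_self, Matrix.one_mul,
      Matrix.mul_one]
    rw [show star (2⁻¹ : ℂ) = 2⁻¹ by simp]
    module
  rw [← hproj]
  exact posSemidef_conjTranspose_mul_self _

theorem trace_pauliEigenstate (k : Fin 3) : (pauliEigenstate k).trace = 1 := by
  simp [pauliEigenstate, trace_pauli_succ]

theorem trace_pauli_mul_pauliEigenstate (j k : Fin 3) :
    (pauli j.succ * pauliEigenstate k).trace = if j = k then 1 else 0 := by
  simp [pauliEigenstate, Matrix.mul_add, trace_pauli_succ, trace_pauli_succ_mul_pauli_succ]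

theorem pauliChannel_sub_pauliChannel_pauliEigenstate {p q : Fin 4 → ℝ}
    (hpq : ∑ i, p i = ∑ i, q i) (k : Fin 3) :
    pauliChannel p (pauliEigenstate k) - pauliChannel q (pauliEigenstate k) =
      ((p 0 + p k.succ - (q 0 + q k.succ) : ℝ) : ℂ) • pauli k.succ := by
  simp [pauliChannel_sub_pauliChannel hpq, trace_pauli_mul_pauliEigenstate]

section Masking

variable {dA dB : ℕ} {M : Matrix (Fin dA × Fin dB) (Fin 2) ℂ}

theorem not_forall_pauli_mem_ker_marginals (hM : Mᴴ * M = 1) :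
    ¬ ∀ k : Fin 3, pauli k.succ ∈ LinearMap.ker (marginals M) := by
  intro h
  obtain ⟨hx, hy, hz⟩ : σx ∈ LinearMap.ker (marginals M) ∧ σy ∈ LinearMap.ker (marginals M) ∧
      σz ∈ LinearMap.ker (marginals M) := ⟨h 0, h 1, h 2⟩
  have h10 : single 1 0 (1 : ℂ) ∈ LinearMap.ker (marginals M) := by
    rw [single_one_zero_eq_smul_σx_sub_I_smul_σy]
    exact Submodule.smul_mem _ _ (Submodule.sub_mem _ hx (Submodule.smul_mem _ _ hy))
  have hAB : (basisImage M 0)ᴴ * basisImage M 1 = 0 := by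
    simpa only [marginals_apply, ptA_mul_single_mul_conjTranspose, Prod.fst_zero,
      transpose_eq_zero] using congrArg Prod.fst (LinearMap.mem_ker.mp h10)
  have hAA : basisImage M 0 * (basisImage M 0)ᴴ = basisImage M 1 * (basisImage M 1)ᴴ := by
    rw [LinearMap.mem_ker, σz_eq_single_sub_single, map_sub, sub_eq_zero] at hz
    simpa only [marginals_apply, ptB_mul_single_mul_conjTranspose] using congrArg Prod.snd hz
  have h0 := Matrix.eq_zero_of_conjTranspose_mul_eq_zero_of_mul_conjTranspose_eq hAB hAA
  have hcol : ∀ x, M x 0 = 0 := fun x => congrFun (congrFun h0 x.1) x.2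
  simpa [Matrix.mul_apply, hcol] using congrFun (congrFun hM 0) 0

theorem pauli_mem_ker_marginals_of_ne {p q : Fin 4 → ℝ} (hpq : ∑ i, p i = ∑ i, q i) {k : Fin 3}
    (hmask : marginals M (pauliChannel p (pauliEigenstate k)) =
      marginals M (pauliChannel q (pauliEigenstate k)))
    (hk : p 0 + p k.succ ≠ q 0 + q k.succ) :
    pauli k.succ ∈ LinearMap.ker (marginals M) := by
  rw [← LinearMap.sub_mem_ker_iff, pauliChannel_sub_pauliChannel_pauliEigenstate hpq] at hmask
  exact (Submodule.smul_mem_iff _ (Complex.ofReal_ne_zero.mpr (sub_ne_zero.mpr hk))).mp hmask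

theorem pauliChannel_sub_mem_ker_marginals {k : Fin 3}
    (hker : ∀ j ≠ k, pauli j.succ ∈ LinearMap.ker (marginals M))
    {p q : Fin 4 → ℝ} (hpq : ∑ i, p i = ∑ i, q i) (hk : p 0 + p k.succ = q 0 + q k.succ)
    (ρ : Matrix (Fin 2) (Fin 2) ℂ) :
    pauliChannel p ρ - pauliChannel q ρ ∈ LinearMap.ker (marginals M) := by
  rw [pauliChannel_sub_pauliChannel hpq]
  refine Submodule.sum_mem _ fun j _ => ?_
  rcases eq_or_ne j k with rfl | hjk
  · simp [hk]
  · exact Submodule.smul_mem _ _ (hker j hjk)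

end Masking

-- Row `a` of `maskingUnitary k` is `⟨eₐ|` for an eigenbasis `(eₐ)` of `σₖ`, so the diagonal of
-- `U σⱼ Uᴴ` consists of the expectations `⟨eₐ|σⱼ|eₐ⟩`, which vanish for `j ≠ k`.
def maskingUnitary : Fin 3 → Matrix (Fin 2) (Fin 2) ℂ :=
  ![((√2 : ℝ) : ℂ)⁻¹ • !![1, 1; 1, -1], ((√2 : ℝ) : ℂ)⁻¹ • !![1, -Complex.I; 1, Complex.I], 1]

theorem ofReal_sqrt_two_sq : ((√2 : ℝ) : ℂ) ^ 2 = 2 := by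
  rw [← Complex.ofReal_pow, Real.sq_sqrt zero_le_two]; norm_num

theorem maskingUnitary_conjTranspose_mul_self (k : Fin 3) :
    (maskingUnitary k)ᴴ * maskingUnitary k = 1 := by
  fin_cases k <;> ext a b <;> fin_cases a <;> fin_cases b <;>
    simp [maskingUnitary, Matrix.mul_apply, Fin.sum_univ_two, Complex.conj_ofReal] <;>
    ring_nf <;> simp [ofReal_sqrt_two_sq]

theorem diag_maskingUnitary_mul_pauli_mul {j k : Fin 3} (hjk : j ≠ k) :
    (maskingUnitary k * pauli j.succ * (maskingUnitary k)ᴴ).diag = 0 := by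
  fin_cases j <;> fin_cases k <;> ext a <;> fin_cases a <;>
    simp_all [maskingUnitary, pauli, σx, σy, σz, Matrix.vecMul, dotProduct, conjTranspose_apply,
      Fin.sum_univ_two, Complex.conj_ofReal] <;>
    ring_nf <;> simp

def pauliMasker (k : Fin 3) : Matrix (Fin 2 × Fin 2) (Fin 2) ℂ := copyIsometry 2 * maskingUnitary k

theorem pauliMasker_conjTranspose_mul_self (k : Fin 3) :
    (pauliMasker k)ᴴ * pauliMasker k = 1 := by
  rw [pauliMasker, conjTranspose_mul, Matrix.mul_assoc, ← Matrix.mul_assoc (copyIsometry 2)ᴴ,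
    copyIsometry_conjTranspose_mul_self, Matrix.one_mul, maskingUnitary_conjTranspose_mul_self]

theorem pauli_mem_ker_marginals_pauliMasker {j k : Fin 3} (hjk : j ≠ k) :
    pauli j.succ ∈ LinearMap.ker (marginals (pauliMasker k)) := by
  rw [LinearMap.mem_ker, pauliMasker, marginals_mul, marginals_copyIsometry,
    diag_maskingUnitary_mul_pauli_mul hjk]
  exact Prod.ext diagonal_zero diagonal_zero

theorem stmt8 (𝔐 : Set (Fin 4 → ℝ))
    (hprob : ∀ p ∈ 𝔐, (∀ i, 0 ≤ p i) ∧ ∑ i, p i = 1) :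
    (∃ (dA dB : ℕ) (M : Matrix (Fin dA × Fin dB) (Fin 2) ℂ),
      Mᴴ * M = 1 ∧
      ∀ ρ : Matrix (Fin 2) (Fin 2) ℂ, ρ.PosSemidef → ρ.trace = 1 →
        ∀ p ∈ 𝔐, ∀ q ∈ 𝔐,
          ptA (M * pauliChannel p ρ * Mᴴ) = ptA (M * pauliChannel q ρ * Mᴴ) ∧
          ptB (M * pauliChannel p ρ * Mᴴ) = ptB (M * pauliChannel q ρ * Mᴴ)) ↔
    (∃ (k : Fin 3) (c : ℝ), 0 ≤ c ∧ c ≤ 1 ∧ ∀ p ∈ 𝔐, p 0 + p k.succ = c) := by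
  have hsum : ∀ p ∈ 𝔐, ∀ q ∈ 𝔐, ∑ i, p i = ∑ i, q i := fun p hp q hq =>
    (hprob p hp).2.trans (hprob q hq).2.symm
  constructor
  · rintro ⟨dA, dB, M, hM, hmask⟩
    obtain ⟨k, hk⟩ : ∃ k : Fin 3, pauli k.succ ∉ LinearMap.ker (marginals M) := by
      simpa using not_forall_pauli_mem_ker_marginals hM
    have hconst : ∀ p ∈ 𝔐, ∀ q ∈ 𝔐, p 0 + p k.succ = q 0 + q k.succ := by
      intro p hp q hq
      by_contra hne
      obtain ⟨hA, hB⟩ := hmask _ (pauliEigenstate_posSemidef k) (trace_pauliEigenstate k) p hp q hq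
      exact hk (pauli_mem_ker_marginals_of_ne (hsum p hp q hq) (Prod.ext hA hB) hne)
    obtain ⟨c, hc⟩ := exists_forall_eq_of_pairwise_eq (fun p hp =>
      ⟨add_nonneg ((hprob p hp).1 0) ((hprob p hp).1 _),
        add_le_one_of_sum_eq_one (hprob p hp).1 (hprob p hp).2 (Fin.succ_ne_zero k).symm⟩) hconst
    exact ⟨k, c, hc⟩
  · rintro ⟨k, c, -, -, hc⟩
    refine ⟨2, 2, pauliMasker k, pauliMasker_conjTranspose_mul_self k, fun ρ _ _ p hp q hq => ?_⟩
    have hker := pauliChannel_sub_mem_ker_marginals (fun j => pauli_mem_ker_marginals_pauliMasker)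
      (hsum p hp q hq) ((hc p hp).trans (hc q hq).symm) ρ
    exact Prod.ext_iff.mp (LinearMap.sub_mem_ker_iff.mp hker)
end
end

section
/- There is no isometry M : ℂ² → ℂ^{d_A} ⊗ ℂ^{d_B} masking all qubit pure states, i.e., such that Tr_B[M|ψ⟩⟨ψ|M†] is the same for all unit vectors |ψ⟩ ∈ ℂ² and Tr_A[M|ψ⟩⟨ψ|M†] is the same for all |ψ⟩. -/
/-!
Write `u = M|0⟩`, `v = M|1⟩` as coefficient matrices `U, V`, so that the reduced states of
`x = M|ψ⟩` are `Tr_B = X Xᴴ` and `Tr_A = (Xᴴ X)ᵀ`. Masking on `B` for `|0⟩, |1⟩` gives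
`U Uᴴ = V Vᴴ`, and masking on `A` for the superpositions `a|0⟩ ± b|1⟩`, `a|0⟩ ± i b|1⟩` kills the
cross term `Vᴴ U` by polarization. Then `(Uᴴ U)ᴴ (Uᴴ U) = Uᴴ V Vᴴ U = 0`, so `U = 0`,
contradicting `Mᴴ M = 1`.
-/

open Matrix
open scoped ComplexOrder

noncomputable section

/-- The matrix `X` with `x = ∑ X a b • |a⟩ ⊗ |b⟩`. -/
def coeffMatrix {m n R : Type*} [Semiring R] : (m × n → R) ≃ₗ[R] Matrix m n R :=
  (LinearEquiv.curry R R m n).trans (ofLinearEquiv R)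

@[simp]
theorem coeffMatrix_apply {m n R : Type*} [Semiring R] (x : m × n → R) (i : m) (j : n) :
    coeffMatrix x i j = x (i, j) :=
  rfl

namespace Matrix

variable {l m n R : Type*}

theorem mul_vecMulVec_star_mul_conjTranspose [Fintype m] [Semiring R] [StarRing R]
    (M : Matrix l m R) (ψ : m → R) :
    M * vecMulVec ψ (star ψ) * Mᴴ = vecMulVec (M *ᵥ ψ) (star (M *ᵥ ψ)) := by
  rw [mul_vecMulVec, vecMulVec_mul, star_mulVec]

theorem mulVec_injective_of_conjTranspose_mul_self_eq_one [Fintype m] [Fintype n]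
    [DecidableEq n] [CommSemiring R] [StarRing R] {M : Matrix m n R} (hM : Mᴴ * M = 1) :
    Function.Injective M.mulVec :=
  Function.LeftInverse.injective (g := Mᴴ.mulVec) fun ψ => by
    rw [mulVec_mulVec, hM, one_mulVec]

theorem eq_zero_of_mul_conjTranspose_eq_of_conjTranspose_mul_eq_zero [Fintype m] [Fintype n]
    [PartialOrder R] [NonUnitalRing R] [StarRing R] [StarOrderedRing R] [NoZeroDivisors R]
    {U V : Matrix m n R} (hUV : U * Uᴴ = V * Vᴴ) (hVU : Vᴴ * U = 0) : U = 0 := by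
  have h : (Uᴴ * U)ᴴ * (Uᴴ * U) = 0 :=
    calc (Uᴴ * U)ᴴ * (Uᴴ * U) = Uᴴ * (U * Uᴴ) * U := by
          simp only [conjTranspose_mul, conjTranspose_conjTranspose, Matrix.mul_assoc]
      _ = (Vᴴ * U)ᴴ * (Vᴴ * U) := by
          simp only [hUV, conjTranspose_mul, conjTranspose_conjTranspose, Matrix.mul_assoc]
      _ = 0 := by rw [hVU, Matrix.mul_zero]
  exact conjTranspose_mul_self_eq_zero.1 (conjTranspose_mul_self_eq_zero.1 h)

theorem conjTranspose_mul_eq_zero_of_polarization [Fintype m] {a b : ℂ} (ha : a ≠ 0)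
    (hb : b ≠ 0) {U V : Matrix m n ℂ}
    (h₁ : (a • U + b • V)ᴴ * (a • U + b • V) = (a • U + (-b) • V)ᴴ * (a • U + (-b) • V))
    (h₂ : (a • U + (b * Complex.I) • V)ᴴ * (a • U + (b * Complex.I) • V) =
      (a • U + (-(b * Complex.I)) • V)ᴴ * (a • U + (-(b * Complex.I)) • V)) :
    Vᴴ * U = 0 := by
  simp only [conjTranspose_add, conjTranspose_smul, Matrix.add_mul, Matrix.mul_add,
    Matrix.smul_mul, Matrix.mul_smul, star_neg, star_mul', Complex.star_def,
    Complex.conj_I] at h₁ h₂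
  -- `module` normalizes scalars with `ring`, which does not know `I ^ 2 = -1`
  have hI (W : Matrix n n ℂ) : (Complex.I ^ 2 + 1) • W = 0 := by simp [Complex.I_sq]
  have h : (4 * (starRingEnd ℂ b * a)) • (Vᴴ * U) = 0 := by
    linear_combination (norm := module) h₁ + Complex.I • h₂
      + (2 * starRingEnd ℂ b * a) • hI (Vᴴ * U) - (2 * b * starRingEnd ℂ a) • hI (Uᴴ * V)
  simpa [ha, hb] using h

end Matrix

theorem star_vec2_dotProduct_self (a b : ℂ) :
    star ![a, b] ⬝ᵥ ![a, b] = (Complex.normSq a + Complex.normSq b : ℝ) := by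
  simp [dotProduct, Fin.sum_univ_two, Complex.normSq_eq_conj_mul_self]

theorem LinearMap.apply_vec2 {R M : Type*} [Semiring R] [AddCommMonoid M] [Module R M]
    (T : (Fin 2 → R) →ₗ[R] M) (a b : R) : T ![a, b] = a • T ![1, 0] + b • T ![0, 1] := by
  rw [← map_smul, ← map_smul, ← map_add]
  congr 1
  ext i
  fin_cases i <;> simp

section PartialTrace

variable {dA dB : ℕ} {k : Type*} [Fintype k]

theorem ptA_mul_vecMulVec_mul_conjTranspose (M : Matrix (Fin dA × Fin dB) k ℂ) (ψ : k → ℂ) :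
    ptA (M * vecMulVec ψ (star ψ) * Mᴴ) =
      ((coeffMatrix (M *ᵥ ψ))ᴴ * coeffMatrix (M *ᵥ ψ))ᵀ := by
  rw [mul_vecMulVec_star_mul_conjTranspose]
  ext i j
  simp [ptA, vecMulVec_apply, mul_apply, mul_comm]

theorem ptB_mul_vecMulVec_mul_conjTranspose (M : Matrix (Fin dA × Fin dB) k ℂ) (ψ : k → ℂ) :
    ptB (M * vecMulVec ψ (star ψ) * Mᴴ) =
      coeffMatrix (M *ᵥ ψ) * (coeffMatrix (M *ᵥ ψ))ᴴ := by
  rw [mul_vecMulVec_star_mul_conjTranspose]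
  ext i j
  simp [ptB, vecMulVec_apply, mul_apply]

end PartialTrace

theorem stmt15 :
    ¬ ∃ (dA dB : ℕ) (M : Matrix (Fin dA × Fin dB) (Fin 2) ℂ),
      Mᴴ * M = 1 ∧
      ∀ ψ φ : Fin 2 → ℂ, star ψ ⬝ᵥ ψ = 1 → star φ ⬝ᵥ φ = 1 →
        ptA (M * vecMulVec ψ (star ψ) * Mᴴ) = ptA (M * vecMulVec φ (star φ) * Mᴴ) ∧
        ptB (M * vecMulVec ψ (star ψ) * Mᴴ) = ptB (M * vecMulVec φ (star φ) * Mᴴ) := by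
  rintro ⟨dA, dB, M, hM, hmask⟩
  let T : (Fin 2 → ℂ) →ₗ[ℂ] Matrix (Fin dA) (Fin dB) ℂ := coeffMatrix.toLinearMap ∘ₗ M.mulVecLin
  have hgram (a b c d : ℂ) (hab : Complex.normSq a + Complex.normSq b = 1)
      (hcd : Complex.normSq c + Complex.normSq d = 1) :
      (T ![a, b])ᴴ * T ![a, b] = (T ![c, d])ᴴ * T ![c, d] ∧
        T ![a, b] * (T ![a, b])ᴴ = T ![c, d] * (T ![c, d])ᴴ := by
    have h := hmask ![a, b] ![c, d] (by rw [star_vec2_dotProduct_self, hab, Complex.ofReal_one])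
      (by rw [star_vec2_dotProduct_self, hcd, Complex.ofReal_one])
    rw [ptA_mul_vecMulVec_mul_conjTranspose, ptA_mul_vecMulVec_mul_conjTranspose,
      ptB_mul_vecMulVec_mul_conjTranspose, ptB_mul_vecMulVec_mul_conjTranspose] at h
    exact ⟨transpose_inj.1 h.1, h.2⟩
  -- the unit vectors `(3/5, ±4/5)` and `(3/5, ±4i/5)` avoid square roots
  have hVU : (T ![0, 1])ᴴ * T ![1, 0] = 0 := by
    refine conjTranspose_mul_eq_zero_of_polarization (a := 3 / 5) (b := 4 / 5) (by norm_num)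
      (by norm_num) ?_ ?_ <;>
    · simp only [← LinearMap.apply_vec2]
      exact (hgram _ _ _ _ (by norm_num [Complex.normSq_apply])
        (by norm_num [Complex.normSq_apply])).1
  have hU : T ![1, 0] = 0 :=
    eq_zero_of_mul_conjTranspose_eq_of_conjTranspose_mul_eq_zero
      (hgram 1 0 0 1 (by simp) (by simp)).2 hVU
  have h0 : ![(1 : ℂ), 0] = 0 := mulVec_injective_of_conjTranspose_mul_self_eq_one hM
    (by rw [mulVec_zero]; exact coeffMatrix.map_eq_zero_iff.1 hU)
  simpa using congrFun h0 0
end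
end
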